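/- arXiv:2011.05907 — 4 statements merged into one kernel-verified Lean document; each statement's English description precedes it below -/
import Mathlib

section
/- Let S and S̃ be finite sets and π : S → S̃ a map. For ℓ : S → ℕ define π_*ℓ : S̃ → ℕ by π_*ℓ(x) = Σ_{y ∈ S, π(y)=x} ℓ(y). Then for any ℓ̃ : S̃ → ℕ and k : S → ℕ, the generalized Chu–Vandermonde identity holds: ∏_{x̃ ∈ S̃} C(π_*k(x̃), ℓ̃(x̃)) = Σ_{ℓ : S → ℕ, π_*ℓ = ℓ̃} ∏_{x ∈ S} C(k(x), ℓ(x)), where C(a,b) denotes the binomial coefficient with the convention C(a,b)=0 if a<b. -/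
/-- The pushforward of `ℓ : S → ℕ` along `π : S → S'`: fiberwise sum
(`0` on points not in the image of `π`). -/
def pushforward {S S' : Type} [Fintype S] [DecidableEq S'] (π : S → S')
    (ℓ : S → ℕ) : S' → ℕ :=
  fun x => ∑ y : S, if π y = x then ℓ y else 0

/-!
Over a single fibre the identity is Vandermonde's convolution for finitely many summands:
`C(∑ k, n)` is the coefficient of `X ^ n` in `∏ (1 + X) ^ k(x)`. Taking the product of these
identities over all points of `S'` and expanding, a choice of one distribution per fibre is the
same as a single `ℓ : S → ℕ` with `π_* ℓ = ℓ̃`.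
-/

open Finset

theorem PowerSeries.coeff_one_add_X_pow (R : Type*) [Semiring R] (n k : ℕ) :
    coeff k ((1 + X : PowerSeries R) ^ n) = n.choose k := by
  have : ((1 + Polynomial.X) ^ n : Polynomial R) = ((1 + X : PowerSeries R) ^ n) := by
    push_cast; rfl
  rw [← this, Polynomial.coeff_coe, Polynomial.coeff_one_add_X_pow]

theorem Finset.sum_finsuppAntidiag_eq_sum_piAntidiag {ι μ M : Type*} [DecidableEq ι]
    [AddCommMonoid μ] [HasAntidiagonal μ] [DecidableEq μ] [AddCommMonoid M]
    (s : Finset ι) (n : μ) (F : (ι → μ) → M) :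
    ∑ l ∈ s.finsuppAntidiag n, F l = ∑ f ∈ s.piAntidiag n, F f := by
  rw [finsuppAntidiag, sum_map, ← sum_attach (piAntidiag s n)]
  rfl

theorem Nat.sum_choose_eq_sum_piAntidiag {ι : Type*} [DecidableEq ι] (s : Finset ι)
    (k : ι → ℕ) (n : ℕ) :
    (∑ i ∈ s, k i).choose n = ∑ l ∈ s.piAntidiag n, ∏ i ∈ s, (k i).choose (l i) := by
  calc (∑ i ∈ s, k i).choose n
      = PowerSeries.coeff n (∏ i ∈ s, (1 + PowerSeries.X : PowerSeries ℕ) ^ k i) := by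
        rw [prod_pow_eq_pow_sum, PowerSeries.coeff_one_add_X_pow, cast_id]
    _ = ∑ l ∈ s.finsuppAntidiag n, ∏ i ∈ s, (k i).choose (l i) := by
        simp only [PowerSeries.coeff_prod, PowerSeries.coeff_one_add_X_pow, cast_id]
    _ = ∑ l ∈ s.piAntidiag n, ∏ i ∈ s, (k i).choose (l i) :=
        sum_finsuppAntidiag_eq_sum_piAntidiag s n fun l => ∏ i ∈ s, (k i).choose (l i)

section Pushforward

variable {S S' : Type} [Fintype S] [DecidableEq S'] (π : S → S')

theorem pushforward_apply (ℓ : S → ℕ) (x' : S') :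
    pushforward π ℓ x' = ∑ x with π x = x', ℓ x :=
  (sum_filter ..).symm

theorem prod_sum_piAntidiag_fiber_eq_finsum [Fintype S'] [DecidableEq S] {R : Type*}
    [CommSemiring R] (f : S → ℕ → R) (ℓt : S' → ℕ) :
    ∏ x', ∑ l ∈ piAntidiag {x | π x = x'} (ℓt x'), ∏ x with π x = x', f x (l x) =
      ∑ᶠ ℓ ∈ {ℓ : S → ℕ | pushforward π ℓ = ℓt}, ∏ x, f x (ℓ x) := by
  have mem_iff (L : S' → S → ℕ) :
      L ∈ Fintype.piFinset (fun x' => piAntidiag {x | π x = x'} (ℓt x')) ↔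
        ∀ x', ∑ x with π x = x', L x' x = ℓt x' ∧ ∀ x, L x' x ≠ 0 → π x = x' := by
    simp
  rw [prod_univ_sum, ← finsum_mem_coe_finset]
  refine finsum_mem_eq_of_bijOn (fun L x => L (π x) x) ⟨?maps, ?inj, ?surj⟩ fun L _ => ?prod
  case maps =>
    intro L hL
    rw [mem_coe, mem_iff] at hL
    funext x'
    rw [pushforward_apply, ← (hL x').1]
    exact sum_congr rfl fun x hx => congrArg (L · x) (mem_filter.1 hx).2
  case inj =>
    intro L hL L' hL' h
    rw [mem_coe, mem_iff] at hL hL'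
    funext x' x
    by_cases hx : π x = x'
    · subst hx
      exact congr_fun h x
    · rw [not_imp_comm.1 ((hL x').2 x) hx, not_imp_comm.1 ((hL' x').2 x) hx]
  case surj =>
    intro ℓ hℓ
    refine ⟨fun x' x => if π x = x' then ℓ x else 0, ?_, by simp⟩
    rw [mem_coe, mem_iff]
    intro x'
    refine ⟨?_, fun x => by simp +contextual⟩
    rw [sum_congr rfl fun x hx => if_pos (mem_filter.1 hx).2, ← pushforward_apply, hℓ]
  case prod =>
    refine (prod_congr rfl fun x' _ => prod_congr rfl fun x hx => ?_).trans
      (prod_fiberwise univ π _)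
    rw [← (mem_filter.1 hx).2]

end Pushforward

/-- **Generalized Chu–Vandermonde identity.**  For finite sets `S`, `S'`, a map
`π : S → S'`, and `k : S → ℕ`, `ℓ̃ : S' → ℕ`:
`∏_{x̃} C(π_*k(x̃), ℓ̃(x̃)) = Σ_{ℓ : π_*ℓ = ℓ̃} ∏_{x} C(k(x), ℓ(x))`,
with the convention `C(a,b) = 0` for `a < b` (as for `Nat.choose`). -/
theorem chu_vandermonde_pushforward
    {S S' : Type} [Fintype S] [Fintype S'] [DecidableEq S'] (π : S → S')
    (k : S → ℕ) (ℓt : S' → ℕ) :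
    (∏ x : S', Nat.choose (pushforward π k x) (ℓt x)) =
      ∑ᶠ ℓ ∈ {ℓ : S → ℕ | pushforward π ℓ = ℓt},
        ∏ x : S, Nat.choose (k x) (ℓ x) := by
  classical
  simp only [pushforward_apply, Nat.sum_choose_eq_sum_piAntidiag]
  exact prod_sum_piAntidiag_fiber_eq_finsum π (fun x m => (k x).choose m) ℓt
end

section
/- Let E be a set and P a vector space with a family (▷ᵃ)_{a∈E} of bilinear products. Then (P, (▷ᵃ)) is an E-multi-pre-Lie algebra (i.e., x ▷ᵃ (y ▷ᵇ z) − (x ▷ᵃ y) ▷ᵇ z = y ▷ᵇ (x ▷ᵃ z) − (y ▷ᵇ x) ▷ᵃ z for all a,b ∈ E) if and only if the bilinear product on P ⊗ kE defined by (σ ⊗ a) ▷ (τ ⊗ b) := (σ ▷ᵃ τ) ⊗ b is a pre-Lie product. -/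
/-!
Both identities are trilinear and `P ⊗ kE` is spanned by the tensors `σ ⊗ a`, on which the
associator of the product on `P ⊗ kE` is `(x ▷ᵃ (y ▷ᵇ z) - (x ▷ᵃ y) ▷ᵇ z) ⊗ c`. So the pre-Lie
symmetry upstairs is the multi-pre-Lie symmetry tensored with `c`, and `σ ↦ σ ⊗ c` is injective.
-/

open TensorProduct

namespace LinearMap

variable {R M : Type*} [CommSemiring R] [AddCommGroup M] [Module R M]

/-- Note the sign: this is minus the ring-theoretic `associator`. -/
def associator (μ : M →ₗ[R] M →ₗ[R] M) : M →ₗ[R] M →ₗ[R] M →ₗ[R] M :=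
  (llcomp R M M M ∘ₗ μ).compl₂ μ - μ.compr₂ μ

@[simp]
theorem associator_apply (μ : M →ₗ[R] M →ₗ[R] M) (x y z : M) :
    μ.associator x y z = μ x (μ y z) - μ (μ x y) z :=
  rfl

theorem associator_flip_eq_iff (μ : M →ₗ[R] M →ₗ[R] M) :
    μ.associator.flip = μ.associator ↔
      ∀ x y z, μ x (μ y z) - μ (μ x y) z = μ y (μ x z) - μ (μ y x) z := by
  simp only [LinearMap.ext_iff, flip_apply, associator_apply]
  exact ⟨fun h x y z => h y x z, fun h x y z => h y x z⟩

end LinearMap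

theorem TensorProduct.tmul_single_one_injective {R M E : Type*} [CommSemiring R]
    [AddCommMonoid M] [Module R M] (b : E) :
    Function.Injective fun m : M => m ⊗ₜ[R] Finsupp.single b (1 : R) :=
  Function.LeftInverse.injective (g := TensorProduct.rid R M ∘ₗ (Finsupp.lapply b).lTensor M)
    fun m => by simp

theorem associator_tmul_single {R P E : Type*} [CommRing R] [AddCommGroup P] [Module R P]
    {prod : E → P →ₗ[R] P →ₗ[R] P}
    {q : (P ⊗[R] (E →₀ R)) →ₗ[R] (P ⊗[R] (E →₀ R)) →ₗ[R] (P ⊗[R] (E →₀ R))}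
    (hq : ∀ (a b : E) (σ τ : P),
      q (σ ⊗ₜ Finsupp.single a 1) (τ ⊗ₜ Finsupp.single b 1) = prod a σ τ ⊗ₜ Finsupp.single b 1)
    (a b c : E) (x y z : P) :
    q.associator (x ⊗ₜ Finsupp.single a 1) (y ⊗ₜ Finsupp.single b 1) (z ⊗ₜ Finsupp.single c 1) =
      (prod a x (prod b y z) - prod b (prod a x y) z) ⊗ₜ Finsupp.single c 1 := by
  rw [LinearMap.associator_apply, hq, hq, hq, hq, sub_tmul]

theorem multiPreLie_iff_tensor_preLie_general {K P E : Type} [Field K]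
    [AddCommGroup P] [Module K P]
    (prod : E → P →ₗ[K] P →ₗ[K] P)
    (q : (P ⊗[K] (E →₀ K)) →ₗ[K] (P ⊗[K] (E →₀ K)) →ₗ[K] (P ⊗[K] (E →₀ K)))
    (hq : ∀ (a b : E) (σ τ : P),
      q (σ ⊗ₜ[K] Finsupp.single a 1) (τ ⊗ₜ[K] Finsupp.single b 1)
        = (prod a σ τ) ⊗ₜ[K] Finsupp.single b 1) :
    (∀ (a b : E) (x y z : P),
        prod a x (prod b y z) - prod b (prod a x y) z
          = prod b y (prod a x z) - prod a (prod b y x) z)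
      ↔ (∀ u v w : P ⊗[K] (E →₀ K),
          q u (q v w) - q (q u v) w = q v (q u w) - q (q v u) w) := by
  rw [← q.associator_flip_eq_iff]
  constructor
  · intro h
    ext x a y b z c
    simp only [AlgebraTensorModule.curry_apply, LinearMap.restrictScalars_self, curry_apply,
      LinearMap.coe_comp, Function.comp_apply, Finsupp.lsingle_apply, LinearMap.flip_apply,
      associator_tmul_single hq]
    rw [h b a y x z]
  · intro h a b x y z
    have hb := congr($h (y ⊗ₜ Finsupp.single b 1) (x ⊗ₜ Finsupp.single a 1)
      (z ⊗ₜ Finsupp.single b 1))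
    rw [LinearMap.flip_apply, associator_tmul_single hq, associator_tmul_single hq] at hb
    exact tmul_single_one_injective b hb

/-- **Multi-pre-Lie ⇔ pre-Lie on `P ⊗ kE`.**  Let `P` be a vector space over a field `K`
of characteristic zero, `E` a set, and `(▷ᵃ)_{a∈E}` a family of bilinear products on `P`.
Let `q` be the bilinear product on `P ⊗ kE` (with `kE` the free vector space `E →₀ K`)
determined by `(σ ⊗ a) ▷ (τ ⊗ b) = (σ ▷ᵃ τ) ⊗ b`.  Then `(P, (▷ᵃ))` is an
`E`-multi-pre-Lie algebra if and only if `q` is a pre-Lie product. -/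
theorem multiPreLie_iff_tensor_preLie {K P E : Type} [Field K] [CharZero K]
    [AddCommGroup P] [Module K P]
    (prod : E → P →ₗ[K] P →ₗ[K] P)
    (q : (P ⊗[K] (E →₀ K)) →ₗ[K] (P ⊗[K] (E →₀ K)) →ₗ[K] (P ⊗[K] (E →₀ K)))
    (hq : ∀ (a b : E) (σ τ : P),
      q (σ ⊗ₜ[K] Finsupp.single a 1) (τ ⊗ₜ[K] Finsupp.single b 1)
        = (prod a σ τ) ⊗ₜ[K] Finsupp.single b 1) :
    (∀ (a b : E) (x y z : P),
        prod a x (prod b y z) - prod b (prod a x y) z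
          = prod b y (prod a x z) - prod a (prod b y x) z)
      ↔ (∀ u v w : P ⊗[K] (E →₀ K),
          q u (q v w) - q (q u v) w = q v (q u w) - q (q v u) w) :=
  multiPreLie_iff_tensor_preLie_general prod q hq
end

section
/- For single-vertex trees decorated by a commutative monoid Ω, the deformed plugging at the root satisfies the binomial symmetry needed for the pre-Lie identity: for all n, k, k̄ ∈ ℕ^{d+1} and finite tuples ℓ ∈ (ℕ^{d+1})^n, ℓ̄ ∈ (ℕ^{d+1})^m, Σ_{ℓ,ℓ̄} C(n, ℓ̄)·C(n − |ℓ̄| + k̄, ℓ) − Σ_{ℓ,r,ℓ̄} C(n; ℓ̄, r)·C(k̄, ℓ) = Σ_{ℓ,ℓ̄} C(n, ℓ)·C(n − |ℓ| + k, ℓ̄) − Σ_{ℓ,ℓ̄,r̄} C(n; ℓ, r̄)·C(k, ℓ̄), where all binomial/multinomial coefficients are componentwise and |ℓ| = Σᵢ ℓᵢ. In particular, by Chu–Vandermonde, Σ_{ℓ,r} C(n − |ℓ̄|, r)·C(k̄, ℓ) = Σ_ℓ C(n − |ℓ̄| + k̄, ℓ). -/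
/-- Multi-indices in `ℕ^{d+1}`. -/
abbrev Nd (d : ℕ) : Type := Fin (d + 1) → ℕ

/-- Componentwise binomial coefficient on `ℕ^{d+1}` (zero if some component exceeds). -/
def binom {d : ℕ} (n ℓ : Nd d) : ℕ := ∏ c, Nat.choose (n c) (ℓ c)

/-- Componentwise multinomial coefficient `C(k, ℓ₁, …, ℓ_n)` of a tuple of
multi-indices, as the iterated product of binomial coefficients
`∏ᵢ C(k − ℓ₁ − ⋯ − ℓ_{i−1}, ℓᵢ)`; it vanishes as soon as the subtractions leave `ℕ^{d+1}`. -/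
def ndMnom {d : ℕ} (k : Nd d) {n : ℕ} (L : Fin n → Nd d) : ℕ :=
  ∏ i : Fin n, binom (k - ∑ j ∈ Finset.univ.filter (· < i), L j) (L i)

/-! Summing `ndMnom k L` over all tuples `L` of length `n` gives `∏ c, (n + 1) ^ k c`: peel off
the first entry of `L` and apply the binomial theorem in each coordinate. This total is
multiplicative in `k`, which is the Chu–Vandermonde identity. Since `ndMnom` of a concatenation
`Fin.append A B` factors as `ndMnom k A * ndMnom (k - ∑ A) B`, exchanging the order of summation
turns each of the two differences into `∑ ndMnom nv ℓ * (T (nv - ∑ ℓ + k) - T (nv - ∑ ℓ) * T k)`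
with `T` that total, so both vanish. -/

open Finset Function

section Sums

variable {M : Type*} [AddCommMonoid M]

theorem Fin.sum_filter_lt_succ_cons {n : ℕ} (x : M) (L : Fin n → M) (i : Fin n) :
    ∑ j ∈ univ.filter (· < i.succ), (Fin.cons x L : Fin (n + 1) → M) j
      = x + ∑ j ∈ univ.filter (· < i), L j := by
  simp [sum_filter, Fin.sum_univ_succ, Fin.succ_pos]

theorem Fin.sum_filter_lt_castAdd_append {m n : ℕ} (A : Fin m → M) (B : Fin n → M) (i : Fin m) :
    ∑ j ∈ univ.filter (· < Fin.castAdd n i), Fin.append A B j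
      = ∑ j ∈ univ.filter (· < i), A j := by
  have hB (j : Fin n) : ¬ m + (j : ℕ) < i := by omega
  simp [sum_filter, Fin.sum_univ_add, Fin.lt_def, -Fin.val_fin_lt, hB]

theorem Fin.sum_filter_lt_natAdd_append {m n : ℕ} (A : Fin m → M) (B : Fin n → M) (i : Fin n) :
    ∑ j ∈ univ.filter (· < Fin.natAdd m i), Fin.append A B j
      = ∑ j, A j + ∑ j ∈ univ.filter (· < i), B j := by
  have hA (j : Fin m) : (j : ℕ) < m + i := by omega
  simp [sum_filter, Fin.sum_univ_add, Fin.lt_def, -Fin.val_fin_lt, hA]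

end Sums

section Multinomial

variable {d n m : ℕ}

theorem le_of_binom_ne_zero {a b : Nd d} (h : binom a b ≠ 0) : b ≤ a := fun c =>
  not_lt.1 fun hc => h (prod_eq_zero (mem_univ c) (Nat.choose_eq_zero_of_lt hc))

theorem le_of_ndMnom_ne_zero {k : Nd d} {L : Fin n → Nd d} (h : ndMnom k L ≠ 0) :
    L ≤ fun _ => k := fun i =>
  (le_of_binom_ne_zero fun h0 => h (prod_eq_zero (mem_univ i) h0)).trans tsub_le_self

theorem ndMnom_cons (k l : Nd d) (L : Fin n → Nd d) :
    ndMnom k (Fin.cons l L) = binom k l * ndMnom (k - l) L := by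
  simp [ndMnom, Fin.prod_univ_succ, Fin.sum_filter_lt_succ_cons, tsub_add_eq_tsub_tsub]

theorem ndMnom_append (k : Nd d) (A : Fin m → Nd d) (B : Fin n → Nd d) :
    ndMnom k (Fin.append A B) = ndMnom k A * ndMnom (k - ∑ i, A i) B := by
  simp [ndMnom, Fin.prod_univ_add, Fin.sum_filter_lt_castAdd_append,
    Fin.sum_filter_lt_natAdd_append, tsub_add_eq_tsub_tsub]

theorem support_ndMnom_subset (k : Nd d) :
    support (ndMnom k : (Fin n → Nd d) → ℕ) ⊆ Set.Iic fun _ => k :=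
  fun _ => le_of_ndMnom_ne_zero

theorem hasFiniteSupport_ndMnom (k : Nd d) :
    HasFiniteSupport (ndMnom k : (Fin n → Nd d) → ℕ) :=
  (Set.finite_Iic _).subset (support_ndMnom_subset k)

theorem finsum_binom_mul_prod_pow (k : Nd d) (x : ℕ) :
    ∑ᶠ l : Nd d, binom k l * ∏ c, x ^ (k - l) c = ∏ c, (x + 1) ^ k c := by
  have hsupp : support (fun l : Nd d => binom k l * ∏ c, x ^ (k - l) c)
      ⊆ Fintype.piFinset fun c => range (k c + 1) := fun l hl => by
    simpa [Nat.lt_succ_iff, Pi.le_def] using le_of_binom_ne_zero (left_ne_zero_of_mul hl)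
  rw [finsum_eq_sum_of_support_subset _ hsupp]
  simp only [binom, ← prod_mul_distrib, Pi.sub_apply]
  rw [← prod_univ_sum (fun c => range (k c + 1)) fun c t => (k c).choose t * x ^ (k c - t)]
  refine prod_congr rfl fun c _ => ?_
  rw [add_comm x 1, add_pow]
  simp [mul_comm]

theorem finsum_ndMnom (k : Nd d) :
    ∑ᶠ L : Fin n → Nd d, ndMnom k L = ∏ c, (n + 1) ^ k c := by
  induction n generalizing k with
  | zero => simp [finsum_unique, ndMnom]
  | succ n ih =>
    let e := Fin.consEquiv fun _ : Fin (n + 1) => Nd d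
    have hfin : HasFiniteSupport (ndMnom k ∘ e) :=
      (hasFiniteSupport_ndMnom k).comp_of_injective e.injective
    calc ∑ᶠ L : Fin (n + 1) → Nd d, ndMnom k L
        = ∑ᶠ p : Nd d × (Fin n → Nd d), (ndMnom k ∘ e) p := (finsum_comp_equiv e).symm
      _ = ∑ᶠ (l : Nd d) (L : Fin n → Nd d), binom k l * ndMnom (k - l) L := by
          rw [finsum_curry _ hfin]
          simp only [← ndMnom_cons]
          rfl
      _ = ∑ᶠ l : Nd d, binom k l * ∏ c, (n + 1) ^ (k - l) c := by
          simp only [← mul_finsum, ih]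
      _ = ∏ c, (n + 1 + 1) ^ k c := finsum_binom_mul_prod_pow k (n + 1)

theorem finsum_cast_ndMnom (R : Type*) [CommSemiring R] (k : Nd d) :
    ∑ᶠ L : Fin n → Nd d, (ndMnom k L : R) = ∏ c, ((n : R) + 1) ^ k c := by
  calc ∑ᶠ L : Fin n → Nd d, (ndMnom k L : R)
      = ((∑ᶠ L : Fin n → Nd d, ndMnom k L : ℕ) : R) :=
        ((Nat.castAddMonoidHom R).map_finsum (hasFiniteSupport_ndMnom k)).symm
    _ = ∏ c, ((n : R) + 1) ^ k c := by
        rw [finsum_ndMnom]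
        push_cast
        rfl

theorem finsum_cast_ndMnom_add (R : Type*) [CommSemiring R] (x y : Nd d) :
    ∑ᶠ L : Fin n → Nd d, (ndMnom (x + y) L : R)
      = (∑ᶠ L : Fin n → Nd d, (ndMnom x L : R)) * ∑ᶠ L : Fin n → Nd d, (ndMnom y L : R) := by
  simp only [finsum_cast_ndMnom, ← prod_mul_distrib, ← pow_add, Pi.add_apply]

theorem finsum_finsum_ndMnom_mul_ndMnom (R : Type*) [CommSemiring R] (a : Nd d)
    (g : (Fin m → Nd d) → Nd d) :
    ∑ᶠ (ℓ : Fin n → Nd d) (ℓb : Fin m → Nd d), (ndMnom a ℓb * ndMnom (g ℓb) ℓ : R)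
      = ∑ᶠ ℓb : Fin m → Nd d, (ndMnom a ℓb : R) * ∑ᶠ ℓ : Fin n → Nd d, (ndMnom (g ℓb) ℓ : R) := by
  have hs (f : (Fin m → Nd d) → R) :
      support (fun ℓb => (ndMnom a ℓb : R) * f ℓb)
        ⊆ ↑(Finset.Iic fun _ => a : Finset (Fin m → Nd d)) := fun ℓb h => by
    rw [coe_Iic]
    exact support_ndMnom_subset a fun h0 => h (by simp [h0])
  have hfin (k : Nd d) : HasFiniteSupport fun ℓ : Fin n → Nd d => (ndMnom k ℓ : R) :=
    (hasFiniteSupport_ndMnom k).comp Nat.cast_zero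
  calc _ = ∑ᶠ ℓ : Fin n → Nd d, ∑ ℓb ∈ Finset.Iic fun _ => a,
        (ndMnom a ℓb * ndMnom (g ℓb) ℓ : R) :=
        finsum_congr fun ℓ => finsum_eq_sum_of_support_subset _ (hs _)
    _ = ∑ ℓb ∈ Finset.Iic fun _ => a, ∑ᶠ ℓ : Fin n → Nd d, (ndMnom a ℓb * ndMnom (g ℓb) ℓ : R) :=
        finsum_sum_comm _ _ fun ℓb _ => (hfin _).fun_mul_right _
    _ = ∑ ℓb ∈ Finset.Iic fun _ => a,
          (ndMnom a ℓb : R) * ∑ᶠ ℓ : Fin n → Nd d, (ndMnom (g ℓb) ℓ : R) :=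
        sum_congr rfl fun ℓb _ => (mul_finsum' _ _ (hfin _)).symm
    _ = _ := (finsum_eq_sum_of_support_subset _ (hs _)).symm

variable (R : Type*) [CommSemiring R] [NoZeroDivisors R]

theorem finsum_ndMnom_sub_add_mul_ndMnom_eq_append (nv k : Nd d) :
    ∑ᶠ (ℓ : Fin n → Nd d) (ℓb : Fin m → Nd d),
        (ndMnom nv ℓb * ndMnom (nv - (∑ i, ℓb i) + k) ℓ : R)
      = ∑ᶠ (ℓ : Fin n → Nd d) (r : Fin n → Nd d) (ℓb : Fin m → Nd d),
        (ndMnom nv (Fin.append ℓb r) * ndMnom k ℓ : R) := by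
  simp only [ndMnom_append, Nat.cast_mul, ← finsum_mul, ← mul_finsum,
    finsum_finsum_ndMnom_mul_ndMnom, finsum_cast_ndMnom_add]
  rw [finsum_mul]
  simp only [mul_assoc]

theorem finsum_ndMnom_mul_ndMnom_sub_add_eq_append (nv k : Nd d) :
    ∑ᶠ (ℓ : Fin n → Nd d) (ℓb : Fin m → Nd d),
        (ndMnom nv ℓ * ndMnom (nv - (∑ i, ℓ i) + k) ℓb : R)
      = ∑ᶠ (ℓ : Fin n → Nd d) (ℓb : Fin m → Nd d) (rb : Fin m → Nd d),
        (ndMnom nv (Fin.append ℓ rb) * ndMnom k ℓb : R) := by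
  simp only [ndMnom_append, Nat.cast_mul, ← finsum_mul, ← mul_finsum, finsum_cast_ndMnom_add,
    mul_assoc]

end Multinomial

/-- **The binomial symmetry underlying the pre-Lie identity for the deformed plugging.**
For all `n, k, k̄ ∈ ℕ^{d+1}` and arities `nn, m`, summing over all tuples
`ℓ, r ∈ (ℕ^{d+1})^{nn}` and `ℓ̄, r̄ ∈ (ℕ^{d+1})^m` (the sums are finite by the vanishing
conventions):
`Σ_{ℓ,ℓ̄} C(n,ℓ̄)C(n−|ℓ̄|+k̄,ℓ) − Σ_{ℓ,r,ℓ̄} C(n;ℓ̄,r)C(k̄,ℓ)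
  = Σ_{ℓ,ℓ̄} C(n,ℓ)C(n−|ℓ|+k,ℓ̄) − Σ_{ℓ,ℓ̄,r̄} C(n;ℓ,r̄)C(k,ℓ̄)`,
and moreover (Chu–Vandermonde)
`Σ_{ℓ,r} C(n−|ℓ̄|,r)·C(k̄,ℓ) = Σ_ℓ C(n−|ℓ̄|+k̄,ℓ)` for any tuple `ℓ̄`. -/
theorem deformed_plugging_binomial_symmetry (d nn m : ℕ) (nv k kb : Nd d) :
    ((∑ᶠ ℓ : Fin nn → Nd d, ∑ᶠ ℓb : Fin m → Nd d,
        (ndMnom nv ℓb * ndMnom (nv - (∑ i, ℓb i) + kb) ℓ : ℤ))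
      - ∑ᶠ ℓ : Fin nn → Nd d, ∑ᶠ r : Fin nn → Nd d, ∑ᶠ ℓb : Fin m → Nd d,
        (ndMnom nv (Fin.append ℓb r) * ndMnom kb ℓ : ℤ))
    = ((∑ᶠ ℓ : Fin nn → Nd d, ∑ᶠ ℓb : Fin m → Nd d,
        (ndMnom nv ℓ * ndMnom (nv - (∑ i, ℓ i) + k) ℓb : ℤ))
      - ∑ᶠ ℓ : Fin nn → Nd d, ∑ᶠ ℓb : Fin m → Nd d, ∑ᶠ rb : Fin m → Nd d,
        (ndMnom nv (Fin.append ℓ rb) * ndMnom k ℓb : ℤ))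
    ∧ ∀ ℓb : Fin m → Nd d,
        (∑ᶠ ℓ : Fin nn → Nd d, ∑ᶠ r : Fin nn → Nd d,
          ndMnom (nv - ∑ i, ℓb i) r * ndMnom kb ℓ)
        = ∑ᶠ ℓ : Fin nn → Nd d, ndMnom (nv - (∑ i, ℓb i) + kb) ℓ := by
  refine ⟨?_, fun ℓb => ?_⟩
  · rw [finsum_ndMnom_sub_add_mul_ndMnom_eq_append, finsum_ndMnom_mul_ndMnom_sub_add_eq_append,
      sub_self, sub_self]
  · simpa [← finsum_mul, ← mul_finsum] using (finsum_cast_ndMnom_add ℕ (nv - ∑ i, ℓb i) kb).symm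
end

section
/- In a pre-Lie algebra (P, ▷) where P is spanned by rooted trees and where the brace operation (x₁⋯x_n) ▷ z is defined recursively by (x₁⋯x_n) ▷ z = x₁ ▷ ((x₂⋯x_n) ▷ z) − Σ_{i=2}^n (x₂⋯x_{i−1}(x₁ ▷ xᵢ)x_{i+1}⋯x_n) ▷ z, the brace element (x₁⋯x_n) ▷ z is invariant under any permutation of x₁,…,x_n. -/
/-- The Guin–Oudom brace operation `(x₁ ⋯ x_n) ▷ z` of a pre-Lie product `p`, defined
recursively by `(x₁⋯x_n) ▷ z = x₁ ▷ ((x₂⋯x_n) ▷ z) − Σᵢ ((x₂⋯(x₁ ▷ xᵢ)⋯x_n) ▷ z)`. -/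
def brace {K A : Type} [Field K] [AddCommGroup A] [Module K A]
    (p : A →ₗ[K] A →ₗ[K] A) : (n : ℕ) → (Fin n → A) → A → A
  | 0, _, z => z
  | n + 1, x, z =>
      p (x 0) (brace p n (fun i => x i.succ) z)
        - ∑ i : Fin n,
            brace p n (Function.update (fun j : Fin n => x j.succ) i (p (x 0) (x i.succ))) z

namespace BraceAux

variable {K A : Type} [Field K] [AddCommGroup A] [Module K A]
    (p : A →ₗ[K] A →ₗ[K] A)

lemma brace_succ (n : ℕ) (x : Fin (n + 1) → A) (z : A) :
    brace p (n + 1) x z =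
      p (x 0) (brace p n (fun i => x i.succ) z)
        - ∑ i : Fin n,
            brace p n (Function.update (fun j : Fin n => x j.succ) i (p (x 0) (x i.succ))) z :=
  rfl

lemma brace_cons (n : ℕ) (a : A) (t : Fin n → A) (z : A) :
    brace p (n + 1) (Fin.cons a t) z =
      p a (brace p n t z)
        - ∑ i : Fin n, brace p n (Function.update t i (p a (t i))) z := by
  simp only [brace_succ, Fin.cons_zero, Fin.cons_succ]

/-- Additivity of the brace in one slot. -/
lemma brace_update_add (n : ℕ) :
    ∀ (t : Fin n → A) (i : Fin n) (u v z : A),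
      brace p n (Function.update t i (u + v)) z
        = brace p n (Function.update t i u) z + brace p n (Function.update t i v) z := by
  induction n with
  | zero => exact fun t i => i.elim0
  | succ n IH =>
    intro t i u v z
    induction i using Fin.cases with
    | zero =>
      have ht : ∀ w : A, (fun j : Fin n => Function.update t 0 w j.succ) = fun j => t j.succ := by
        intro w; funext j; rw [Function.update_of_ne (Fin.succ_ne_zero j)]
      rw [brace_succ, brace_succ, brace_succ]
      simp only [Function.update_self, ht, map_add, LinearMap.add_apply]
      rw [Finset.sum_congr rfl fun i _ => IH (fun j => t j.succ) i _ _ z,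
        Finset.sum_add_distrib]
      abel
    | succ j =>
      have h0 : ∀ w : A, Function.update t j.succ w 0 = t 0 := by
        intro w; rw [Function.update_of_ne (Fin.succ_ne_zero j).symm]
      have htail : ∀ w : A,
          (fun k : Fin n => Function.update t j.succ w k.succ)
            = Function.update (fun k : Fin n => t k.succ) j w := by
        intro w; funext k
        rcases eq_or_ne k j with rfl | h
        · simp [Function.update_self]
        · rw [Function.update_of_ne ((Fin.succ_injective n).ne h),
            Function.update_of_ne h]
      have htail' : ∀ (w : A) (k : Fin n),
          Function.update t j.succ w k.succ
            = Function.update (fun k : Fin n => t k.succ) j w k :=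
        fun w k => congrFun (htail w) k
      rw [brace_succ, brace_succ, brace_succ]
      simp only [h0, htail, htail']
      have key : ∀ k : Fin n,
          brace p n (Function.update (Function.update (fun k : Fin n => t k.succ) j (u + v)) k
              (p (t 0) (Function.update (fun k : Fin n => t k.succ) j (u + v) k))) z
            = brace p n (Function.update (Function.update (fun k : Fin n => t k.succ) j u) k
                (p (t 0) (Function.update (fun k : Fin n => t k.succ) j u k))) z
              + brace p n (Function.update (Function.update (fun k : Fin n => t k.succ) j v) k
                  (p (t 0) (Function.update (fun k : Fin n => t k.succ) j v k))) z := by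
        intro k
        rcases eq_or_ne k j with rfl | h
        · simp only [Function.update_self, Function.update_idem, map_add]
          exact IH _ k _ _ z
        · rw [Function.update_of_ne h, Function.update_of_ne h, Function.update_of_ne h,
            Function.update_comm h.symm, Function.update_comm h.symm,
            Function.update_comm h.symm]
          exact IH _ j u v z
      rw [Finset.sum_congr rfl fun k _ => key k, Finset.sum_add_distrib,
        IH (fun k : Fin n => t k.succ) j u v z, map_add]
      abel

/-- Expansion of `brace` on `a :: b :: t` into level-`m` terms. -/
lemma brace_expand (m : ℕ) (t : Fin m → A) (z : A) (a b : A) :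
    brace p (m + 2) (Fin.cons a (Fin.cons b t)) z
      = p a (p b (brace p m t z))
        - ∑ j, p a (brace p m (Function.update t j (p b (t j))) z)
        - p (p a b) (brace p m t z)
        + ∑ j, brace p m (Function.update t j (p (p a b) (t j))) z
        - ∑ j, p b (brace p m (Function.update t j (p a (t j))) z)
        + ∑ j, brace p m (Function.update t j (p b (p a (t j)))) z
        + ∑ j, ∑ k ∈ Finset.univ.erase j,
            brace p m (Function.update (Function.update t j (p a (t j))) k (p b (t k))) z := by
  rw [brace_cons, brace_cons]
  rw [Fin.sum_univ_succ]
  simp only [Fin.cons_zero, Fin.cons_succ, Fin.update_cons_zero, ← Fin.cons_update]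
  rw [brace_cons]
  have hsum : ∀ j : Fin m,
      brace p (m + 1) (Fin.cons b (Function.update t j (p a (t j)))) z
        = p b (brace p m (Function.update t j (p a (t j))) z)
          - (brace p m (Function.update t j (p b (p a (t j)))) z
            + ∑ k ∈ Finset.univ.erase j,
                brace p m (Function.update (Function.update t j (p a (t j))) k (p b (t k))) z) := by
    intro j
    rw [brace_cons]
    congr 1
    rw [← Finset.add_sum_erase _ _ (Finset.mem_univ j)]
    congr 1
    · rw [Function.update_self, Function.update_idem]
    · refine Finset.sum_congr rfl fun k hk => ?_
      rw [Function.update_of_ne (Finset.ne_of_mem_erase hk)]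
  rw [Finset.sum_congr rfl fun j _ => hsum j]
  simp only [map_sub, map_sum, Finset.sum_sub_distrib, Finset.sum_add_distrib]
  abel

/-- Swapping the first two arguments of the brace. -/
lemma brace_swap_aux
    (hp : ∀ x y z : A, p x (p y z) - p (p x y) z = p y (p x z) - p (p y x) z)
    (m : ℕ) (a b : A) (t : Fin m → A) (z : A) :
    brace p (m + 2) (Fin.cons a (Fin.cons b t)) z
      = brace p (m + 2) (Fin.cons b (Fin.cons a t)) z := by
  rw [brace_expand, brace_expand]
  have h1 : p a (p b (brace p m t z))
      = p b (p a (brace p m t z)) - p (p b a) (brace p m t z) + p (p a b) (brace p m t z) := by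
    have h := hp a b (brace p m t z)
    rw [sub_eq_iff_eq_add] at h
    exact h
  have h4 : (∑ j, brace p m (Function.update t j (p (p a b) (t j))) z)
      = (∑ j, brace p m (Function.update t j (p (p b a) (t j))) z)
        + (∑ j, brace p m (Function.update t j (p a (p b (t j)))) z)
        - ∑ j, brace p m (Function.update t j (p b (p a (t j)))) z := by
    rw [eq_sub_iff_add_eq, ← Finset.sum_add_distrib, ← Finset.sum_add_distrib]
    refine Finset.sum_congr rfl fun j _ => ?_
    rw [← brace_update_add, ← brace_update_add]
    refine congrArg (fun w => brace p m (Function.update t j w) z) ?_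
    have h := hp a b (t j)
    rw [sub_eq_sub_iff_add_eq_add] at h
    rw [add_comm (p (p a b) (t j)), add_comm (p (p b a) (t j))]
    exact h.symm
  have h7 : (∑ j, ∑ k ∈ Finset.univ.erase j,
        brace p m (Function.update (Function.update t j (p a (t j))) k (p b (t k))) z)
      = ∑ j, ∑ k ∈ Finset.univ.erase j,
          brace p m (Function.update (Function.update t j (p b (t j))) k (p a (t k))) z := by
    rw [Finset.sum_comm' (t' := Finset.univ) (s' := fun k => Finset.univ.erase k)
      (fun x y => by simp [and_comm, ne_comm, eq_comm])]
    refine Finset.sum_congr rfl fun j _ => Finset.sum_congr rfl fun k hk => ?_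
    rw [Function.update_comm (Finset.ne_of_mem_erase hk)]
  rw [h1, h4, h7]
  abel

lemma brace_cons_comp (n : ℕ)
    (hInv : ∀ (x : Fin n → A) (z : A) (σ : Equiv.Perm (Fin n)),
      brace p n (x ∘ σ) z = brace p n x z)
    (a : A) (t : Fin n → A) (σ : Equiv.Perm (Fin n)) (z : A) :
    brace p (n + 1) (Fin.cons a (t ∘ σ)) z = brace p (n + 1) (Fin.cons a t) z := by
  rw [brace_cons, brace_cons, hInv t z σ]
  congr 1
  have step : ∀ i : Fin n,
      brace p n (Function.update (t ∘ ⇑σ) i (p a ((t ∘ ⇑σ) i))) z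
        = brace p n (Function.update t (σ i) (p a (t (σ i)))) z := by
    intro i
    rw [show Function.update (t ∘ ⇑σ) i (p a ((t ∘ ⇑σ) i))
          = Function.update t (σ i) (p a (t (σ i))) ∘ ⇑σ from
        (Function.update_comp_eq_of_injective t σ.injective i _).symm, hInv]
  rw [Finset.sum_congr rfl fun i _ => step i]
  exact Equiv.sum_comp σ fun j => brace p n (Function.update t j (p a (t j))) z

end BraceAux

/-- **Symmetry of the brace.**  In a pre-Lie algebra `(P, ▷)` over a field of
characteristic zero, the brace element `(x₁ ⋯ x_n) ▷ z` is invariant under any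
permutation of `x₁, …, x_n`. -/
theorem brace_perm_invariant {K A : Type} [Field K] [CharZero K]
    [AddCommGroup A] [Module K A]
    (p : A →ₗ[K] A →ₗ[K] A)
    (hp : ∀ x y z : A, p x (p y z) - p (p x y) z = p y (p x z) - p (p y x) z)
    (n : ℕ) (x : Fin n → A) (z : A) (π : Equiv.Perm (Fin n)) :
    brace p n (x ∘ π) z = brace p n x z := by
  open BraceAux in
  induction n generalizing z with
  | zero => rfl
  | succ n IH =>
    rcases n with _ | m
    · rw [show x ∘ ⇑π = x from funext fun i => congrArg x ((Fin.fin_one_eq_zero _).trans (Fin.fin_one_eq_zero i).symm)]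
    · -- `Fin (m + 2)`
      let S : Subgroup (Equiv.Perm (Fin (m + 2))) :=
        { carrier := {σ | ∀ (y : Fin (m + 2) → A) (w : A),
            brace p (m + 2) (y ∘ σ) w = brace p (m + 2) y w}
          one_mem' := fun y w => by
            rw [show y ∘ ⇑(1 : Equiv.Perm (Fin (m + 2))) = y from rfl]
          mul_mem' := @fun σ τ hσ hτ y w => by
            rw [show y ∘ ⇑(σ * τ) = (y ∘ ⇑σ) ∘ ⇑τ from rfl, hτ (y ∘ ⇑σ) w, hσ y w]
          inv_mem' := @fun σ hσ y w => by
            have h : (y ∘ ⇑σ⁻¹) ∘ ⇑σ = y := by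
              funext i
              simp
            rw [← hσ (y ∘ ⇑σ⁻¹) w, h] }
      have hswap01 : Equiv.swap (0 : Fin (m + 2)) 1 ∈ S := by
        intro y w
        have hy : y = Fin.cons (y 0) (Fin.cons (y 1) fun j => y j.succ.succ) := by
          funext i
          induction i using Fin.cases with
          | zero => rfl
          | succ i =>
            induction i using Fin.cases with
            | zero => simp [Fin.succ_zero_eq_one']
            | succ j => simp
        have h1ne : ∀ j : Fin m, j.succ.succ ≠ (1 : Fin (m + 2)) := by
          intro j
          rw [← Fin.succ_zero_eq_one']
          exact (Fin.succ_injective _).ne (Fin.succ_ne_zero j)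
        have hy' : y ∘ ⇑(Equiv.swap (0 : Fin (m + 2)) 1)
            = Fin.cons (y 1) (Fin.cons (y 0) fun j => y j.succ.succ) := by
          funext i
          induction i using Fin.cases with
          | zero => simp
          | succ i =>
            induction i using Fin.cases with
            | zero =>
              simp only [Function.comp_apply, Fin.cons_succ, Fin.cons_zero]
              rw [Fin.succ_zero_eq_one', Equiv.swap_apply_right]
            | succ j =>
              simp only [Function.comp_apply, Fin.cons_succ,
                Equiv.swap_apply_of_ne_of_ne (Fin.succ_ne_zero j.succ) (h1ne j)]
        calc brace p (m + 2) (y ∘ ⇑(Equiv.swap (0 : Fin (m + 2)) 1)) w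
            = brace p (m + 2) (Fin.cons (y 1) (Fin.cons (y 0) fun j => y j.succ.succ)) w := by
              rw [hy']
          _ = brace p (m + 2) (Fin.cons (y 0) (Fin.cons (y 1) fun j => y j.succ.succ)) w :=
              brace_swap_aux p hp m _ _ _ w
          _ = brace p (m + 2) y w := by rw [← hy]
      have hlift : ∀ τ : Equiv.Perm (Fin (m + 1)), Equiv.Perm.decomposeFin.symm (0, τ) ∈ S := by
        intro τ y w
        have hy : y = Fin.cons (y 0) fun j => y j.succ := by
          funext i
          induction i using Fin.cases with
          | zero => rfl
          | succ i => simp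
        have hy' : y ∘ ⇑(Equiv.Perm.decomposeFin.symm (0, τ))
            = Fin.cons (y 0) ((fun j => y j.succ) ∘ ⇑τ) := by
          funext i
          induction i using Fin.cases with
          | zero => simp
          | succ i => simp [Equiv.Perm.decomposeFin_symm_apply_succ]
        rw [hy', brace_cons_comp p (m + 1) (fun x z σ => IH x z σ) (y 0) _ τ w, ← hy]
      have h0s : ∀ v' : Fin (m + 1), Equiv.swap (0 : Fin (m + 2)) v'.succ ∈ S := by
        intro v'
        have e0 : (Equiv.Perm.decomposeFin.symm (0, Equiv.swap 0 v') :
            Equiv.Perm (Fin (m + 2))) 0 = 0 := by simp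
        have e1 : (Equiv.Perm.decomposeFin.symm (0, Equiv.swap 0 v') :
            Equiv.Perm (Fin (m + 2))) 1 = v'.succ := by
          rw [← Fin.succ_zero_eq_one']
          simp [Equiv.Perm.decomposeFin_symm_apply_succ]
        have key : Equiv.swap (0 : Fin (m + 2)) v'.succ
            = Equiv.Perm.decomposeFin.symm (0, Equiv.swap 0 v') * Equiv.swap 0 1
              * (Equiv.Perm.decomposeFin.symm (0, Equiv.swap 0 v'))⁻¹ := by
          rw [← Equiv.swap_apply_apply, e0, e1]
        rw [key]
        exact S.mul_mem (S.mul_mem (hlift _) hswap01) (S.inv_mem (hlift _))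
      have hsw : ∀ u v : Fin (m + 2), u ≠ v → Equiv.swap u v ∈ S := by
        intro u v huv
        rcases Fin.eq_zero_or_eq_succ u with rfl | ⟨u', rfl⟩
        · rcases Fin.eq_zero_or_eq_succ v with rfl | ⟨v', rfl⟩
          · exact absurd rfl huv
          · exact h0s v'
        · rcases Fin.eq_zero_or_eq_succ v with rfl | ⟨v', rfl⟩
          · rw [Equiv.swap_comm]
            exact h0s u'
          · have key : Equiv.swap u'.succ v'.succ
                = Equiv.Perm.decomposeFin.symm (0, Equiv.swap u' v') := by
              ext i
              induction i using Fin.cases with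
              | zero =>
                rw [Equiv.swap_apply_of_ne_of_ne (Fin.succ_ne_zero u').symm
                  (Fin.succ_ne_zero v').symm]
                simp
              | succ i =>
                rw [Function.Injective.swap_apply (Fin.succ_injective _)]
                simp [Equiv.Perm.decomposeFin_symm_apply_succ]
            rw [key]
            exact hlift _
      have hπ : π ∈ S := by
        have hle : Subgroup.closure {σ : Equiv.Perm (Fin (m + 2)) | σ.IsSwap} ≤ S := by
          rw [Subgroup.closure_le]
          rintro σ ⟨u, v, huv, rfl⟩
          exact hsw u v huv
        exact hle (by rw [Equiv.Perm.closure_isSwap]; trivial)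
      exact hπ x z
end
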